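/- Let D be a triangulated category with two t-structures s1 = (C1^{≤0}, C1^{≥0}) and s2 = (C2^{≤0}, C2^{≥0}) such that C1^{≤0} ⊆ C2^{≤0}, and set ℋ = C2^{≤0} ∩ C1^{≥1}. Then the assignments φ(D^{≤0}, D^{≥0}) = (D^{≤0} ∩ C1^{≥1}, D^{≥1} ∩ C2^{≤0}) and ψ(𝒯,ℱ) = (C1^{≤0} * 𝒯, ℱ[1] * C2^{≥0}) are mutually inverse, order preserving bijections between the poset of t-structures (D^{≤0}, D^{≥0}) on D with C1^{≤0} ⊆ D^{≤0} ⊆ C2^{≤0} and the poset of s-torsion pairs in ℋ. -/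

import Mathlib

open CategoryTheory Category Limits Pretriangulated

universe v u

variable (D : Type u) [Category.{v} D] [Preadditive D] [HasZeroObject D]
  [HasShift D ℤ] [∀ n : ℤ, (shiftFunctor D n).Additive]
  [Pretriangulated D] [HasBinaryBiproducts D]

/-- `shiftSet D S n` is the full subcategory `S[n]`: objects isomorphic to `X⟦n⟧`
with `X ∈ S`. -/
def shiftSet (S : Set D) (n : ℤ) : Set D :=
  {A | ∃ B ∈ S, Nonempty (A ≅ B⟦n⟧)}

/-- `starSet D X Y` is `X * Y`: the class of objects `A` admitting a distinguished
triangle `X → A → Y → X[1]` with `X ∈ 𝒳` and `Y ∈ 𝒴`. -/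
def starSet (X Y : Set D) : Set D :=
  {A | ∃ (B C : D) (f : B ⟶ A) (g : A ⟶ C) (h : C ⟶ B⟦(1 : ℤ)⟧),
    B ∈ X ∧ C ∈ Y ∧ Triangle.mk f g h ∈ distTriang D}

/-- `Hom(X, Y) = 0`: every morphism from an object of `X` to an object of `Y` is zero. -/
def homZero (X Y : Set D) : Prop :=
  ∀ A ∈ X, ∀ B ∈ Y, ∀ f : A ⟶ B, f = 0

/-- a class of objects closed under isomorphisms -/
def isoClosed (S : Set D) : Prop :=
  ∀ ⦃A B : D⦄, (A ≅ B) → A ∈ S → B ∈ S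

/-- an additive full subcategory (closed under isomorphisms) which is closed under
direct summands -/
structure AdditiveClosed (S : Set D) : Prop where
  iso : isoClosed D S
  zero : ∀ Z : D, IsZero Z → Z ∈ S
  sum : ∀ A ∈ S, ∀ B ∈ S, (A ⊞ B) ∈ S
  summand : ∀ A ∈ S, ∀ (X : D) (i : X ⟶ A) (p : A ⟶ X), i ≫ p = 𝟙 X → X ∈ S

/-- a torsion pair `(U, V)` in the triangulated category `D` -/
structure IsTorsionPair (U V : Set D) : Prop where
  addU : AdditiveClosed D U
  addV : AdditiveClosed D V
  hom_zero : homZero D U V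
  cover : ∀ A : D, A ∈ starSet D U V

/-- `t₁ ≼ t₂` for torsion pairs in a triangulated category: `U₁ ⊆ U₂` and `U₁[1] ⊆ U₂`. -/
def torsLE (U₁ U₂ : Set D) : Prop :=
  U₁ ⊆ U₂ ∧ shiftSet D U₁ 1 ⊆ U₂

/-- a torsion pair `(T, F)` in an (extension-closed) full subcategory `H` of `D`:
`T` and `F` are additive subcategories of `H` closed under direct summands,
`Hom(T, F) = 0`, and every object of `H` admits a distinguished triangle
`T → X → F → T[1]` with `T ∈ 𝒯`, `F ∈ ℱ`. -/
structure IsTorsionPairIn (H T F : Set D) : Prop where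
  subT : T ⊆ H
  subF : F ⊆ H
  isoT : ∀ ⦃A B : D⦄, (A ≅ B) → A ∈ T → B ∈ H → B ∈ T
  isoF : ∀ ⦃A B : D⦄, (A ≅ B) → A ∈ F → B ∈ H → B ∈ F
  zeroT : ∀ Z : D, IsZero Z → Z ∈ H → Z ∈ T
  zeroF : ∀ Z : D, IsZero Z → Z ∈ H → Z ∈ F
  sumT : ∀ A ∈ T, ∀ B ∈ T, (A ⊞ B) ∈ T
  sumF : ∀ A ∈ F, ∀ B ∈ F, (A ⊞ B) ∈ F
  summandT : ∀ A ∈ T, ∀ (X : D) (i : X ⟶ A) (p : A ⟶ X), i ≫ p = 𝟙 X → X ∈ H → X ∈ T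
  summandF : ∀ A ∈ F, ∀ (X : D) (i : X ⟶ A) (p : A ⟶ X), i ≫ p = 𝟙 X → X ∈ H → X ∈ F
  hom_zero : homZero D T F
  cover : ∀ A ∈ H, A ∈ starSet D T F

/-- an `s`-torsion pair in `H`: a torsion pair with moreover `Hom(T, F[-1]) = 0`. -/
structure IsSTorsionPairIn (H T F : Set D) extends IsTorsionPairIn D H T F : Prop where
  neg_hom_zero : ∀ A ∈ T, ∀ B ∈ F, ∀ f : A ⟶ B⟦(-1 : ℤ)⟧, f = 0

/-- the relation `≼` for torsion pairs in a subcategory `H`: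
`Hom(T, F') = 0` and `Hom(T, F'[-1]) = 0`. -/
def torsLEIn (T F' : Set D) : Prop :=
  homZero D T F' ∧ homZero D T (shiftSet D F' (-1))

/-- a `t`-structure `(L, G) = (S^{≤0}, S^{≥0})` on a triangulated (full) subcategory `S`
of `D` (take `S = Set.univ` for a `t`-structure on `D` itself). -/
structure IsTStructureOn (S L G : Set D) : Prop where
  subL : L ⊆ S
  subG : G ⊆ S
  isoL : ∀ ⦃A B : D⦄, (A ≅ B) → A ∈ L → B ∈ S → B ∈ L
  isoG : ∀ ⦃A B : D⦄, (A ≅ B) → A ∈ G → B ∈ S → B ∈ G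
  hom_zero : homZero D L (shiftSet D G (-1))
  cover : ∀ A ∈ S, A ∈ starSet D L (shiftSet D G (-1))
  shiftL : L ⊆ shiftSet D L (-1)
  shiftG : shiftSet D G (-1) ⊆ G

/-- a `t`-structure `(L, G) = (D^{≤0}, D^{≥0})` on `D`. -/
def IsTStructure (L G : Set D) : Prop := IsTStructureOn D Set.univ L G

/-- a triangulated full subcategory of `D`. -/
structure IsTriangulatedSub (S : Set D) : Prop where
  iso : isoClosed D S
  zero : ∀ Z : D, IsZero Z → Z ∈ S
  shift : ∀ (n : ℤ), ∀ A ∈ S, A⟦n⟧ ∈ S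
  ext₂ : ∀ (T : Triangle D), (T ∈ distTriang D) → T.obj₁ ∈ S → T.obj₃ ∈ S → T.obj₂ ∈ S

/-- an `m`-extended heart on `D`: a full subcategory of the form
`V^{≥ -(m-1)} ∩ V^{≤ 0}` for some `t`-structure `(V^{≤0}, V^{≥0})` on `D`. -/
def IsExtendedHeart (m : ℤ) (E : Set D) : Prop :=
  ∃ L G : Set D, IsTStructure D L G ∧ E = shiftSet D G (m - 1) ∩ L

/-- the relation `E₁ ≤ E₂` for `m`-extended hearts:
`E₁ ⊆ E₂[m] * E₂` and `E₂ ⊆ E₁ * E₁[-m]`. -/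
def extHeartLE (m : ℤ) (E₁ E₂ : Set D) : Prop :=
  E₁ ⊆ starSet D (shiftSet D E₂ m) E₂ ∧ E₂ ⊆ starSet D E₁ (shiftSet D E₁ (-m))

/-!
Everything is decided by orthogonality: for a t-structure, `D^{≤0}` and `D^{≥1}` are each other's
orthogonals, and for a torsion pair in `ℋ`, `𝒯` and `ℱ` are each other's orthogonals inside `ℋ`.
Truncating an object of `ℋ` for a t-structure lying between `s₁` and `s₂` gives its torsion
triangle, and `D^{≤0}[1] ⊆ D^{≤0}` gives the s-condition. Conversely `C₁^{≤0} * 𝒯` is the left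
orthogonal of `ℱ ∪ C₂^{≥1}` and `ℱ * C₂^{≥1}` the right orthogonal of `C₁^{≤0} ∪ 𝒯` (truncate for
`s₁`, resp. `s₂`, then use the torsion pair), and `Hom(𝒯, ℱ[-1]) = 0` makes both stable under the
right shifts. Without the octahedral axiom the truncation triangles of `ψ(𝒯, ℱ)` are built from
cones by hand, and their third vertex is recognised through its orthogonality.
-/

open ZeroObject

section Hom

variable {C : Type*} [Category C]

lemma subsingleton_hom_of_retract_left {X A B : C} {i : X ⟶ A} {p : A ⟶ X}
    (hip : i ≫ p = 𝟙 X) (h : Subsingleton (A ⟶ B)) : Subsingleton (X ⟶ B) :=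
  ⟨fun f g => by rw [← id_comp f, ← id_comp g, ← hip, assoc, assoc, h.elim (p ≫ f) (p ≫ g)]⟩

lemma subsingleton_hom_of_retract_right {X A B : C} {i : X ⟶ A} {p : A ⟶ X}
    (hip : i ≫ p = 𝟙 X) (h : Subsingleton (B ⟶ A)) : Subsingleton (B ⟶ X) :=
  ⟨fun f g => by rw [← comp_id f, ← comp_id g, ← hip, ← assoc, ← assoc, h.elim (f ≫ i) (g ≫ i)]⟩

lemma subsingleton_hom_shift_one_iff [HasShift C ℤ] {A B : C} :
    Subsingleton (A⟦(1 : ℤ)⟧ ⟶ B) ↔ Subsingleton (A ⟶ B⟦(-1 : ℤ)⟧) :=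
  ((shiftEquiv' C 1 (-1) (by norm_num)).toAdjunction.homEquiv A B).subsingleton_congr

end Hom

section ShiftSet

variable {C : Type*} [Category C] [HasShift C ℤ]

lemma isoClosed_shiftSet (S : Set C) (n : ℤ) : isoClosed C (shiftSet C S n) :=
  fun _ _ e ⟨B, hB, ⟨e'⟩⟩ => ⟨B, hB, ⟨e.symm ≪≫ e'⟩⟩

lemma shift_mem_shiftSet {S : Set C} {A : C} (n : ℤ) (hA : A ∈ S) : A⟦n⟧ ∈ shiftSet C S n :=
  ⟨A, hA, ⟨Iso.refl _⟩⟩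

lemma mem_shiftSet_of_shift_mem {S : Set C} {A : C} {m n : ℤ} (hmn : m + n = 0)
    (hA : A⟦m⟧ ∈ S) : A ∈ shiftSet C S n :=
  ⟨A⟦m⟧, hA, ⟨((shiftFunctorCompIsoId C m n hmn).app A).symm⟩⟩

lemma shiftSet_mono {S S' : Set C} (h : S ⊆ S') (n : ℤ) : shiftSet C S n ⊆ shiftSet C S' n :=
  fun _ ⟨B, hB, e⟩ => ⟨B, h hB, e⟩

lemma shiftSet_shiftSet_subset {S : Set C} (hS : isoClosed C S) {m n : ℤ} (hmn : m + n = 0) :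
    shiftSet C (shiftSet C S m) n ⊆ S :=
  fun _ ⟨_, ⟨B, hB, ⟨e⟩⟩, ⟨e'⟩⟩ =>
    hS ((e' ≪≫ (shiftFunctor C n).mapIso e ≪≫ (shiftFunctorCompIsoId C m n hmn).app B).symm) hB

end ShiftSet

section Pretriangulated

variable {C : Type*} [Category C] [Preadditive C] [HasZeroObject C] [HasShift C ℤ]
  [∀ n : ℤ, (shiftFunctor C n).Additive] [Pretriangulated C]

section Triangle

variable {T : Triangle C} (hT : T ∈ distTriang C) {W : C}
include hT

lemma subsingleton_hom_to_obj₂ (h₁ : Subsingleton (W ⟶ T.obj₁))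
    (h₃ : Subsingleton (W ⟶ T.obj₃)) : Subsingleton (W ⟶ T.obj₂) :=
  subsingleton_of_forall_eq 0 fun f => by
    obtain ⟨g, rfl⟩ := Triangle.coyoneda_exact₂ T hT f (h₃.elim _ _)
    rw [h₁.elim g 0, zero_comp]

lemma subsingleton_hom_from_obj₂ (h₁ : Subsingleton (T.obj₁ ⟶ W))
    (h₃ : Subsingleton (T.obj₃ ⟶ W)) : Subsingleton (T.obj₂ ⟶ W) :=
  subsingleton_of_forall_eq 0 fun f => by
    obtain ⟨g, rfl⟩ := Triangle.yoneda_exact₂ T hT f (h₁.elim _ _)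
    rw [h₃.elim g 0, comp_zero]

lemma subsingleton_hom_to_obj₁ (h₃ : Subsingleton (W ⟶ T.obj₃⟦(-1 : ℤ)⟧))
    (h₂ : Subsingleton (W ⟶ T.obj₂)) : Subsingleton (W ⟶ T.obj₁) :=
  subsingleton_hom_to_obj₂ (inv_rot_of_distTriang T hT) h₃ h₂

lemma subsingleton_hom_from_obj₃ (h₂ : Subsingleton (T.obj₂ ⟶ W))
    (h₁ : Subsingleton (T.obj₁⟦(1 : ℤ)⟧ ⟶ W)) : Subsingleton (T.obj₃ ⟶ W) :=
  subsingleton_hom_from_obj₂ (rot_of_distTriang T hT) h₂ h₁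

end Triangle

section Cone

variable {X₁ A Y T₀ X W : C} {a : X₁ ⟶ A} {b : A ⟶ Y} {c : Y ⟶ X₁⟦(1 : ℤ)⟧} {j : T₀ ⟶ Y}
  {x : X₁ ⟶ X} {y : X ⟶ T₀} {φ : X ⟶ A}

lemma eq_zero_of_comp_shift_eq_zero (hA : Triangle.mk a b c ∈ distTriang C)
    (hX : Triangle.mk x y (j ≫ c) ∈ distTriang C) (hxφ : x ≫ φ = a) (hyj : y ≫ j = φ ≫ b)
    (hfac : ∀ m : W ⟶ Y, ∃ k : W ⟶ T₀, m = k ≫ j)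
    (hmono : ∀ v : W ⟶ T₀⟦(1 : ℤ)⟧, v ≫ j⟦(1 : ℤ)⟧' = 0 → v = 0)
    (u : W ⟶ X⟦(1 : ℤ)⟧) (hu : u ≫ φ⟦(1 : ℤ)⟧' = 0) : u = 0 := by
  have hy : u ≫ y⟦(1 : ℤ)⟧' = 0 := hmono _ (by
    rw [assoc, ← Functor.map_comp, hyj, Functor.map_comp, reassoc_of% hu, zero_comp])
  obtain ⟨n, rfl⟩ : ∃ n : W ⟶ X₁⟦(1 : ℤ)⟧, u = n ≫ (-x⟦(1 : ℤ)⟧') :=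
    Triangle.coyoneda_exact₁ _ (rot_of_distTriang _ hX) u hy
  have hn : n ≫ a⟦(1 : ℤ)⟧' = 0 := by
    rw [← hxφ, Functor.map_comp]
    simpa only [Preadditive.comp_neg, Preadditive.neg_comp, neg_eq_zero, assoc] using hu
  obtain ⟨m, rfl⟩ : ∃ m : W ⟶ Y, n = m ≫ c := Triangle.coyoneda_exact₁ _ hA n hn
  obtain ⟨k, rfl⟩ := hfac m
  have hX₃₁ : (j ≫ c) ≫ x⟦(1 : ℤ)⟧' = 0 := comp_distTriang_mor_zero₃₁ _ hX
  simp only [Preadditive.comp_neg, assoc] at hX₃₁ ⊢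
  rw [hX₃₁, comp_zero, neg_zero]

-- With the octahedral axiom `Z` would be a cone of `j`, and `hfac`, `hmono` say that `W` is left
-- orthogonal to that cone.
lemma subsingleton_hom_cone {Z : C} {ψ : A ⟶ Z} {χ : Z ⟶ X⟦(1 : ℤ)⟧}
    (hA : Triangle.mk a b c ∈ distTriang C) (hX : Triangle.mk x y (j ≫ c) ∈ distTriang C)
    (hZ : Triangle.mk φ ψ χ ∈ distTriang C) (hxφ : x ≫ φ = a) (hyj : y ≫ j = φ ≫ b)
    (hfac : ∀ m : W ⟶ Y, ∃ k : W ⟶ T₀, m = k ≫ j)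
    (hmono : ∀ v : W ⟶ T₀⟦(1 : ℤ)⟧, v ≫ j⟦(1 : ℤ)⟧' = 0 → v = 0) :
    Subsingleton (W ⟶ Z) := by
  have hχφ : χ ≫ φ⟦(1 : ℤ)⟧' = 0 := comp_distTriang_mor_zero₃₁ _ hZ
  have hφψ : φ ≫ ψ = 0 := comp_distTriang_mor_zero₁₂ _ hZ
  have hbc : b ≫ c = 0 := comp_distTriang_mor_zero₂₃ _ hA
  refine subsingleton_of_forall_eq 0 fun g => ?_
  have hχ : g ≫ χ = 0 := eq_zero_of_comp_shift_eq_zero hA hX hxφ hyj hfac hmono _ <| by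
    rw [assoc, hχφ, comp_zero]
  obtain ⟨g', rfl⟩ : ∃ g' : W ⟶ A, g = g' ≫ ψ := Triangle.coyoneda_exact₃ _ hZ g hχ
  obtain ⟨k, hk⟩ := hfac (g' ≫ b)
  obtain ⟨m, rfl⟩ : ∃ m : W ⟶ X, k = m ≫ y := Triangle.coyoneda_exact₃ _ hX k <| by
    change k ≫ j ≫ c = 0
    rw [← assoc, ← hk, assoc, hbc, comp_zero]
  obtain ⟨n, hn⟩ : ∃ n : W ⟶ X₁, g' - m ≫ φ = n ≫ a :=
    Triangle.coyoneda_exact₂ _ hA (g' - m ≫ φ) <| by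
    change (g' - m ≫ φ) ≫ b = 0
    rw [Preadditive.sub_comp, assoc, ← hyj, ← assoc, ← hk, sub_self]
  rw [sub_eq_iff_eq_add.mp hn]
  simp [← hxφ, hφψ]

end Cone

section ConeOfComp

variable {P Y Q T₀ F₀ W : C} {p : P ⟶ Y} {q : Y ⟶ Q} {r : Q ⟶ P⟦(1 : ℤ)⟧} {t : T₀ ⟶ P} {f : P ⟶ F₀}
  {d : F₀ ⟶ T₀⟦(1 : ℤ)⟧}

lemma exists_eq_comp_comp_of_subsingleton (hP : Triangle.mk p q r ∈ distTriang C)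
    (hT : Triangle.mk t f d ∈ distTriang C) (hQ : Subsingleton (W ⟶ Q))
    (hF : Subsingleton (W ⟶ F₀)) (m : W ⟶ Y) : ∃ k : W ⟶ T₀, m = k ≫ t ≫ p := by
  obtain ⟨n, rfl⟩ : ∃ n : W ⟶ P, m = n ≫ p := Triangle.coyoneda_exact₂ _ hP m (hQ.elim _ _)
  obtain ⟨k, rfl⟩ : ∃ k : W ⟶ T₀, n = k ≫ t := Triangle.coyoneda_exact₂ _ hT n (hF.elim _ _)
  exact ⟨k, assoc _ _ _⟩

lemma eq_zero_of_comp_shift_comp_eq_zero (hP : Triangle.mk p q r ∈ distTriang C)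
    (hT : Triangle.mk t f d ∈ distTriang C) (hQ : Subsingleton (W ⟶ Q))
    (hF : Subsingleton (W ⟶ F₀)) (v : W ⟶ T₀⟦(1 : ℤ)⟧) (hv : v ≫ (t ≫ p)⟦(1 : ℤ)⟧' = 0) :
    v = 0 := by
  obtain ⟨e, he⟩ : ∃ e : W ⟶ Q, v ≫ t⟦(1 : ℤ)⟧' = e ≫ r :=
    Triangle.coyoneda_exact₁ _ hP _ <| by
      change (v ≫ t⟦(1 : ℤ)⟧') ≫ p⟦(1 : ℤ)⟧' = 0
      rwa [assoc, ← Functor.map_comp]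
  obtain ⟨e', rfl⟩ : ∃ e' : W ⟶ F₀, v = e' ≫ d :=
    Triangle.coyoneda_exact₁ _ hT v <| by
      change v ≫ t⟦(1 : ℤ)⟧' = 0
      rw [he, hQ.elim e 0, zero_comp]
  rw [hF.elim e' 0, zero_comp]

end ConeOfComp

lemma starSet_mono {X X' Y Y' : Set C} (hX : X ⊆ X') (hY : Y ⊆ Y') :
    starSet C X Y ⊆ starSet C X' Y' :=
  fun _ ⟨P, Q, f, g, h, hP, hQ, hT⟩ => ⟨P, Q, f, g, h, hX hP, hY hQ, hT⟩

lemma isoClosed_starSet (X Y : Set C) : isoClosed C (starSet C X Y) := by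
  rintro A A' e ⟨P, Q, f, g, h, hP, hQ, hT⟩
  refine ⟨P, Q, f ≫ e.hom, e.inv ≫ g, h, hP, hQ, isomorphic_distinguished _ hT _ ?_⟩
  refine Triangle.isoMk _ _ (Iso.refl _) e.symm (Iso.refl _) ?_ ?_ ?_ <;>
    (dsimp [Triangle.mk]; simp)

lemma shiftSet_starSet_subset (X Y : Set C) (n : ℤ) :
    shiftSet C (starSet C X Y) n ⊆ starSet C (shiftSet C X n) (shiftSet C Y n) := by
  rintro A ⟨A', ⟨P, Q, f, g, h, hP, hQ, hT⟩, ⟨e⟩⟩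
  exact isoClosed_starSet _ _ e.symm ⟨_, _, _, _, _, shift_mem_shiftSet n hP,
    shift_mem_shiftSet n hQ, Triangle.shift_distinguished _ hT n⟩

lemma subset_starSet_left {X Y : Set C} (hY : (0 : C) ∈ Y) : X ⊆ starSet C X Y :=
  fun A hA => ⟨A, 0, 𝟙 A, 0, 0, hA, hY, contractible_distinguished A⟩

lemma subset_starSet_right {X Y : Set C} (hX : (0 : C) ∈ X) : Y ⊆ starSet C X Y :=
  fun A hA => ⟨0, A, 0, 𝟙 A, 0, hX, hA, contractible_distinguished₁ A⟩

lemma biprod_mem_starSet {X Y : Set C} {A B : C} (hA : A ∈ X) (hB : B ∈ Y) :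
    (A ⊞ B) ∈ starSet C X Y :=
  ⟨A, B, _, _, _, hA, hB, binaryBiproductTriangle_distinguished A B⟩

-- `L = D^{≤0}` and `G = D^{≥0}`; names say `geOne` for `D^{≥1} = shiftSet C G (-1)`.
namespace IsTStructure

variable {L G : Set C} (s : IsTStructure C L G)
include s

lemma subsingleton_hom {A B : C} (hA : A ∈ L) (hB : B ∈ shiftSet C G (-1)) :
    Subsingleton (A ⟶ B) :=
  subsingleton_of_forall_eq 0 (s.hom_zero A hA B hB)

lemma isoClosed_le : isoClosed C L := fun _ _ e hA => s.isoL e hA trivial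

lemma isoClosed_ge : isoClosed C G := fun _ _ e hA => s.isoG e hA trivial

lemma shift_one_mem_le {A : C} (hA : A ∈ L) : A⟦(1 : ℤ)⟧ ∈ L :=
  shiftSet_shiftSet_subset s.isoClosed_le (by norm_num)
    (shiftSet_mono s.shiftL 1 (shift_mem_shiftSet 1 hA))

lemma shift_negOne_mem_geOne {B : C} (hB : B ∈ shiftSet C G (-1)) :
    B⟦(-1 : ℤ)⟧ ∈ shiftSet C G (-1) :=
  shiftSet_mono s.shiftG (-1) (shift_mem_shiftSet (-1) hB)

lemma mem_ge_of_shift_mem {A : C} (hA : A⟦(-1 : ℤ)⟧ ∈ shiftSet C G (-1)) : A ∈ G :=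
  shiftSet_shiftSet_subset s.isoClosed_ge (by norm_num : (-1 : ℤ) + 1 = 0)
    (mem_shiftSet_of_shift_mem (by norm_num) hA)

lemma mem_le_of {A : C} (h : ∀ B ∈ shiftSet C G (-1), Subsingleton (A ⟶ B)) : A ∈ L := by
  obtain ⟨X, Y, f, g, w, hX, hY, hT⟩ := s.cover A trivial
  obtain ⟨q, hq⟩ : ∃ q : X⟦(1 : ℤ)⟧ ⟶ Y, 𝟙 Y = w ≫ q :=
    Triangle.yoneda_exact₃ _ hT (𝟙 Y) ((comp_id g).trans ((h Y hY).elim g 0))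
  have hY₀ : IsZero Y := by
    rw [IsZero.iff_id_eq_zero, hq, (s.subsingleton_hom (s.shift_one_mem_le hX) hY).elim q 0,
      comp_zero]
  have : IsIso f := (Triangle.isZero₃_iff_isIso₁ _ hT).1 hY₀
  exact s.isoClosed_le (asIso f) hX

lemma mem_geOne_of {B : C} (h : ∀ A ∈ L, Subsingleton (A ⟶ B)) : B ∈ shiftSet C G (-1) := by
  obtain ⟨X, Y, f, g, w, hX, hY, hT⟩ := s.cover B trivial
  obtain ⟨q, hq⟩ : ∃ q : X ⟶ Y⟦(-1 : ℤ)⟧, 𝟙 X = q ≫ (Triangle.mk f g w).invRotate.mor₁ :=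
    Triangle.coyoneda_exact₂ _ (inv_rot_of_distTriang _ hT) (𝟙 X)
      ((id_comp f).trans ((h X hX).elim f 0))
  have hX₀ : IsZero X := by
    rw [IsZero.iff_id_eq_zero, hq, (s.subsingleton_hom hX (s.shift_negOne_mem_geOne hY)).elim q 0]
    exact zero_comp
  have : IsIso g := (Triangle.isZero₁_iff_isIso₂ _ hT).1 hX₀
  exact isoClosed_shiftSet _ _ (asIso g).symm hY

lemma zero_mem_le {Z : C} (hZ : IsZero Z) : Z ∈ L :=
  s.mem_le_of fun _ _ => ⟨hZ.eq_of_src⟩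

lemma zero_mem_geOne {Z : C} (hZ : IsZero Z) : Z ∈ shiftSet C G (-1) :=
  s.mem_geOne_of fun _ _ => ⟨hZ.eq_of_tgt⟩

lemma starSet_subset_le {X Y : Set C} (hX : X ⊆ L) (hY : Y ⊆ L) : starSet C X Y ⊆ L :=
  fun _ ⟨_, _, _, _, _, hB, hC, hT⟩ => s.mem_le_of fun _ hW =>
    subsingleton_hom_from_obj₂ hT (s.subsingleton_hom (hX hB) hW) (s.subsingleton_hom (hY hC) hW)

lemma starSet_subset_geOne {X Y : Set C} (hX : X ⊆ shiftSet C G (-1))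
    (hY : Y ⊆ shiftSet C G (-1)) : starSet C X Y ⊆ shiftSet C G (-1) :=
  fun _ ⟨_, _, _, _, _, hB, hC, hT⟩ => s.mem_geOne_of fun _ hW =>
    subsingleton_hom_to_obj₂ hT (s.subsingleton_hom hW (hX hB)) (s.subsingleton_hom hW (hY hC))

lemma retract_mem_le {X A : C} {i : X ⟶ A} {p : A ⟶ X} (hip : i ≫ p = 𝟙 X) (hA : A ∈ L) :
    X ∈ L :=
  s.mem_le_of fun _ hB => subsingleton_hom_of_retract_left hip (s.subsingleton_hom hA hB)

lemma retract_mem_geOne {X A : C} {i : X ⟶ A} {p : A ⟶ X} (hip : i ≫ p = 𝟙 X)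
    (hA : A ∈ shiftSet C G (-1)) : X ∈ shiftSet C G (-1) :=
  s.mem_geOne_of fun _ hB => subsingleton_hom_of_retract_right hip (s.subsingleton_hom hB hA)

lemma geOne_anti {L' G' : Set C} (s' : IsTStructure C L' G') (h : L ⊆ L') :
    shiftSet C G' (-1) ⊆ shiftSet C G (-1) :=
  fun _ hB => s.mem_geOne_of fun _ hA => s'.subsingleton_hom (h hA) hB

end IsTStructure

namespace IsTorsionPairIn

variable {H T F : Set C} (tp : IsTorsionPairIn C H T F)
include tp

lemma mem_torsion_of {A : C} (hA : A ∈ H) (h : ∀ B ∈ F, Subsingleton (A ⟶ B)) : A ∈ T := by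
  obtain ⟨TA, FA, u, v, w, hTA, hFA, hT⟩ := tp.cover A hA
  have : Epi u := Triangle.epi₁ _ hT ((h FA hFA).elim v 0)
  have := isSplitEpi_of_epi u
  exact tp.summandT TA hTA A (section_ u) u (IsSplitEpi.id u) hA

lemma mem_torsionFree_of {B : C} (hB : B ∈ H) (h : ∀ A ∈ T, Subsingleton (A ⟶ B)) : B ∈ F := by
  obtain ⟨TB, FB, u, v, w, hTB, hFB, hT⟩ := tp.cover B hB
  have : Mono v := Triangle.mono₂ _ hT ((h TB hTB).elim u 0)
  have := isSplitMono_of_mono v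
  exact tp.summandF FB hFB B v (retraction v) (IsSplitMono.id v) hB

lemma isoClosed_torsionFree (hH : isoClosed C H) : isoClosed C F :=
  fun _ _ e hA => tp.isoF e hA (hH e (tp.subF hA))

end IsTorsionPairIn

section Phi

variable {L₁ G₁ L₂ G₂ L G : Set C}

lemma isSTorsionPairIn_inter (s₁ : IsTStructure C L₁ G₁) (s₂ : IsTStructure C L₂ G₂)
    (s : IsTStructure C L G) (hL₁ : L₁ ⊆ L) (hL₂ : L ⊆ L₂) :
    IsSTorsionPairIn C (L₂ ∩ shiftSet C G₁ (-1))
      (L ∩ shiftSet C G₁ (-1)) (shiftSet C G (-1) ∩ L₂) where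
  subT _ hA := ⟨hL₂ hA.1, hA.2⟩
  subF _ hB := ⟨hB.2, s₁.geOne_anti s hL₁ hB.1⟩
  isoT _ _ e hA _ := ⟨s.isoClosed_le e hA.1, isoClosed_shiftSet _ _ e hA.2⟩
  isoF _ _ e hB _ := ⟨isoClosed_shiftSet _ _ e hB.1, s₂.isoClosed_le e hB.2⟩
  zeroT _ hZ _ := ⟨s.zero_mem_le hZ, s₁.zero_mem_geOne hZ⟩
  zeroF _ hZ _ := ⟨s.zero_mem_geOne hZ, s₂.zero_mem_le hZ⟩
  sumT _ hA _ hB := ⟨s.starSet_subset_le subset_rfl subset_rfl (biprod_mem_starSet hA.1 hB.1),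
    s₁.starSet_subset_geOne subset_rfl subset_rfl (biprod_mem_starSet hA.2 hB.2)⟩
  sumF _ hA _ hB := ⟨s.starSet_subset_geOne subset_rfl subset_rfl (biprod_mem_starSet hA.1 hB.1),
    s₂.starSet_subset_le subset_rfl subset_rfl (biprod_mem_starSet hA.2 hB.2)⟩
  summandT _ hA _ _ _ hip _ := ⟨s.retract_mem_le hip hA.1, s₁.retract_mem_geOne hip hA.2⟩
  summandF _ hB _ _ _ hip _ := ⟨s.retract_mem_geOne hip hB.1, s₂.retract_mem_le hip hB.2⟩
  hom_zero _ hA _ hB := s.hom_zero _ hA.1 _ hB.1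
  neg_hom_zero _ hA _ hB := s.hom_zero _ hA.1 _ (s.shift_negOne_mem_geOne hB.1)
  cover A hA := by
    obtain ⟨X, Y, u, v, w, hX, hY, hT⟩ := s.cover A trivial
    refine ⟨X, Y, u, v, w, ⟨hX, ?_⟩, ⟨hY, ?_⟩, hT⟩
    · exact s₁.mem_geOne_of fun W hW => subsingleton_hom_to_obj₁ hT
        (s.subsingleton_hom (hL₁ hW) (s.shift_negOne_mem_geOne hY)) (s₁.subsingleton_hom hW hA.2)
    · exact s₂.mem_le_of fun B hB => subsingleton_hom_from_obj₃ hT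
        (s₂.subsingleton_hom hA.1 hB) (s₂.subsingleton_hom (hL₂ (s.shift_one_mem_le hX)) hB)

lemma starSet_inter_geOne_eq (s₁ : IsTStructure C L₁ G₁) (s : IsTStructure C L G) (hL₁ : L₁ ⊆ L) :
    starSet C L₁ (L ∩ shiftSet C G₁ (-1)) = L := by
  refine subset_antisymm (s.starSet_subset_le hL₁ fun _ hA => hA.1) fun A hA => ?_
  obtain ⟨X, Y, u, v, w, hX, hY, hT⟩ := s₁.cover A trivial
  refine ⟨X, Y, u, v, w, hX, ⟨s.mem_le_of fun B hB => ?_, hY⟩, hT⟩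
  exact subsingleton_hom_from_obj₃ hT (s.subsingleton_hom hA hB)
    (s.subsingleton_hom (hL₁ (s₁.shift_one_mem_le hX)) hB)

lemma starSet_shiftSet_geOne_inter_eq (s₂ : IsTStructure C L₂ G₂) (s : IsTStructure C L G)
    (hL₂ : L ⊆ L₂) : starSet C (shiftSet C (shiftSet C G (-1) ∩ L₂) 1) G₂ = G := by
  have hG₂ : shiftSet C G₂ (-1) ⊆ shiftSet C G (-1) := s.geOne_anti s₂ hL₂
  apply subset_antisymm
  · intro B hB
    refine s.mem_ge_of_shift_mem (s.starSet_subset_geOne ?_ hG₂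
      (shiftSet_starSet_subset _ _ (-1) (shift_mem_shiftSet (-1) hB)))
    exact shiftSet_shiftSet_subset (isoClosed_shiftSet _ _) (by norm_num)
      |>.trans' (shiftSet_mono (shiftSet_mono Set.inter_subset_left 1) (-1))
  · intro B hB
    obtain ⟨X, Y, u, v, w, hX, hY, hT⟩ := s₂.cover (B⟦(-1 : ℤ)⟧) trivial
    have hXG : X ∈ shiftSet C G (-1) := s.mem_geOne_of fun W hW => subsingleton_hom_to_obj₁ hT
      (s.subsingleton_hom hW (hG₂ (s₂.shift_negOne_mem_geOne hY)))
      (s.subsingleton_hom hW (shift_mem_shiftSet (-1) hB))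
    have hB' : B ∈ shiftSet C (starSet C (shiftSet C G (-1) ∩ L₂) (shiftSet C G₂ (-1))) 1 :=
      mem_shiftSet_of_shift_mem (by norm_num) ⟨X, Y, u, v, w, ⟨hXG, hX⟩, hY, hT⟩
    exact starSet_mono subset_rfl (shiftSet_shiftSet_subset s₂.isoClosed_ge (by norm_num))
      (shiftSet_starSet_subset _ _ 1 hB')

end Phi

section Psi

variable {L₁ G₁ L₂ G₂ T F : Set C}

lemma zero_mem_torsion (s₁ : IsTStructure C L₁ G₁) (s₂ : IsTStructure C L₂ G₂)
    (tp : IsTorsionPairIn C (L₂ ∩ shiftSet C G₁ (-1)) T F) : (0 : C) ∈ T :=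
  tp.zeroT 0 (isZero_zero C) ⟨s₂.zero_mem_le (isZero_zero C), s₁.zero_mem_geOne (isZero_zero C)⟩

lemma starSet_torsion_subset (s₂ : IsTStructure C L₂ G₂) (h₁₂ : L₁ ⊆ L₂)
    (tp : IsTorsionPairIn C (L₂ ∩ shiftSet C G₁ (-1)) T F) : starSet C L₁ T ⊆ L₂ :=
  s₂.starSet_subset_le h₁₂ fun _ hA => (tp.subT hA).1

lemma subsingleton_hom_of_mem_starSet (s₁ : IsTStructure C L₁ G₁) (s₂ : IsTStructure C L₂ G₂)
    (h₁₂ : L₁ ⊆ L₂) (tp : IsTorsionPairIn C (L₂ ∩ shiftSet C G₁ (-1)) T F) {A B : C}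
    (hA : A ∈ starSet C L₁ T) (hB : B ∈ starSet C F (shiftSet C G₂ (-1))) :
    Subsingleton (A ⟶ B) := by
  obtain ⟨X, Y, _, _, _, hX, hY, hTA⟩ := hA
  obtain ⟨P, Q, _, _, _, hP, hQ, hTB⟩ := hB
  refine subsingleton_hom_from_obj₂ hTA (subsingleton_hom_to_obj₂ hTB ?_ ?_)
    (subsingleton_hom_to_obj₂ hTB ?_ ?_)
  · exact s₁.subsingleton_hom hX (tp.subF hP).2
  · exact s₂.subsingleton_hom (h₁₂ hX) hQ
  · exact subsingleton_of_forall_eq 0 (tp.hom_zero Y hY P hP)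
  · exact s₂.subsingleton_hom (tp.subT hY).1 hQ

lemma mem_starSet_torsion_of (s₁ : IsTStructure C L₁ G₁) (s₂ : IsTStructure C L₂ G₂)
    (h₁₂ : L₁ ⊆ L₂) (tp : IsTorsionPairIn C (L₂ ∩ shiftSet C G₁ (-1)) T F) {A : C}
    (hF : ∀ B ∈ F, Subsingleton (A ⟶ B))
    (hG₂ : ∀ B ∈ shiftSet C G₂ (-1), Subsingleton (A ⟶ B)) : A ∈ starSet C L₁ T := by
  obtain ⟨X, Y, a, b, c, hX, hY, hT⟩ := s₁.cover A trivial
  have hX' : X⟦(1 : ℤ)⟧ ∈ L₁ := s₁.shift_one_mem_le hX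
  have hYL₂ : Y ∈ L₂ := s₂.mem_le_of fun B hB =>
    subsingleton_hom_from_obj₃ hT (hG₂ B hB) (s₂.subsingleton_hom (h₁₂ hX') hB)
  exact ⟨X, Y, a, b, c, hX, tp.mem_torsion_of ⟨hYL₂, hY⟩ fun B hB =>
    subsingleton_hom_from_obj₃ hT (hF B hB) (s₁.subsingleton_hom hX' (tp.subF hB).2), hT⟩

lemma mem_starSet_torsionFree_of (s₁ : IsTStructure C L₁ G₁) (s₂ : IsTStructure C L₂ G₂)
    (h₁₂ : L₁ ⊆ L₂) (tp : IsTorsionPairIn C (L₂ ∩ shiftSet C G₁ (-1)) T F) {B : C}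
    (hL₁ : ∀ A ∈ L₁, Subsingleton (A ⟶ B)) (hT : ∀ A ∈ T, Subsingleton (A ⟶ B)) :
    B ∈ starSet C F (shiftSet C G₂ (-1)) := by
  obtain ⟨X, Y, u, v, w, hX, hY, hB⟩ := s₂.cover B trivial
  have hY' := s₂.shift_negOne_mem_geOne hY
  have hXG₁ : X ∈ shiftSet C G₁ (-1) := s₁.mem_geOne_of fun W hW =>
    subsingleton_hom_to_obj₁ hB (s₂.subsingleton_hom (h₁₂ hW) hY') (hL₁ W hW)
  exact ⟨X, Y, u, v, w, tp.mem_torsionFree_of ⟨hX, hXG₁⟩ fun W hW =>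
    subsingleton_hom_to_obj₁ hB (s₂.subsingleton_hom (tp.subT hW).1 hY') (hT W hW), hY, hB⟩

lemma shift_one_mem_starSet_torsion (s₁ : IsTStructure C L₁ G₁) (s₂ : IsTStructure C L₂ G₂)
    (h₁₂ : L₁ ⊆ L₂) (tp : IsSTorsionPairIn C (L₂ ∩ shiftSet C G₁ (-1)) T F) {A : C}
    (hA : A ∈ starSet C L₁ T) : A⟦(1 : ℤ)⟧ ∈ starSet C L₁ T := by
  have hAL₂ := starSet_torsion_subset s₂ h₁₂ tp.toIsTorsionPairIn hA
  refine mem_starSet_torsion_of s₁ s₂ h₁₂ tp.toIsTorsionPairIn (fun B hB => ?_)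
    (fun B hB => s₂.subsingleton_hom (s₂.shift_one_mem_le hAL₂) hB)
  obtain ⟨X, Y, _, _, _, hX, hY, hT⟩ := hA
  exact subsingleton_hom_shift_one_iff.2 (subsingleton_hom_from_obj₂ hT
    (s₁.subsingleton_hom hX (s₁.shift_negOne_mem_geOne (tp.subF hB).2))
    (subsingleton_of_forall_eq 0 (tp.neg_hom_zero Y hY B hB)))

lemma shift_negOne_mem_starSet_torsionFree (s₁ : IsTStructure C L₁ G₁)
    (s₂ : IsTStructure C L₂ G₂) (h₁₂ : L₁ ⊆ L₂)
    (tp : IsSTorsionPairIn C (L₂ ∩ shiftSet C G₁ (-1)) T F) {B : C}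
    (hB : B ∈ starSet C F (shiftSet C G₂ (-1))) :
    B⟦(-1 : ℤ)⟧ ∈ starSet C F (shiftSet C G₂ (-1)) := by
  obtain ⟨P, Q, _, _, _, hP, hQ, hT⟩ := hB
  refine mem_starSet_torsionFree_of s₁ s₂ h₁₂ tp.toIsTorsionPairIn (fun A hA => ?_)
    (fun A hA => ?_) <;> refine subsingleton_hom_shift_one_iff.1 (subsingleton_hom_to_obj₂ hT ?_ ?_)
  · exact s₁.subsingleton_hom (s₁.shift_one_mem_le hA) (tp.subF hP).2
  · exact s₂.subsingleton_hom (h₁₂ (s₁.shift_one_mem_le hA)) hQ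
  · exact subsingleton_hom_shift_one_iff.2
      (subsingleton_of_forall_eq 0 (tp.neg_hom_zero A hA P hP))
  · exact s₂.subsingleton_hom (s₂.shift_one_mem_le (tp.subT hA).1) hQ

lemma shiftSet_starSet_torsionFree_eq (s₂ : IsTStructure C L₂ G₂)
    (tp : IsTorsionPairIn C (L₂ ∩ shiftSet C G₁ (-1)) T F) :
    shiftSet C (starSet C (shiftSet C F 1) G₂) (-1) = starSet C F (shiftSet C G₂ (-1)) := by
  have hF : isoClosed C F := tp.isoClosed_torsionFree fun _ _ e hA =>
    ⟨s₂.isoClosed_le e hA.1, isoClosed_shiftSet _ _ e hA.2⟩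
  refine subset_antisymm ((shiftSet_starSet_subset _ _ (-1)).trans
    (starSet_mono (shiftSet_shiftSet_subset hF (by norm_num)) subset_rfl)) fun B hB => ?_
  refine mem_shiftSet_of_shift_mem (m := 1) (by norm_num) ?_
  exact starSet_mono subset_rfl (shiftSet_shiftSet_subset s₂.isoClosed_ge (by norm_num))
    (shiftSet_starSet_subset _ _ 1 (shift_mem_shiftSet 1 hB))

lemma mem_starSet_starSet (s₁ : IsTStructure C L₁ G₁) (s₂ : IsTStructure C L₂ G₂)
    (h₁₂ : L₁ ⊆ L₂) (tp : IsTorsionPairIn C (L₂ ∩ shiftSet C G₁ (-1)) T F) (A : C) :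
    A ∈ starSet C (starSet C L₁ T) (starSet C F (shiftSet C G₂ (-1))) := by
  obtain ⟨X₁, Y₁, a, b, c, hX₁, hY₁, hA⟩ := s₁.cover A trivial
  obtain ⟨P, Q, p, q, r, hPL₂, hQ, hP⟩ := s₂.cover Y₁ trivial
  have hPG₁ : P ∈ shiftSet C G₁ (-1) := s₁.mem_geOne_of fun W hW => subsingleton_hom_to_obj₁ hP
    (s₂.subsingleton_hom (h₁₂ hW) (s₂.shift_negOne_mem_geOne hQ)) (s₁.subsingleton_hom hW hY₁)
  obtain ⟨T₀, F₀, t, f, d, hT₀, hF₀, hT⟩ := tp.cover P ⟨hPL₂, hPG₁⟩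
  -- `X` is an extension of `T₀` by `X₁`, hence in `L₁ * T` by construction.
  obtain ⟨X, x, y, hX⟩ := distinguished_cocone_triangle₂ ((t ≫ p) ≫ c)
  obtain ⟨φ, hxφ, hyj⟩ := complete_distinguished_triangle_morphism₂ _ _ hX hA (𝟙 X₁) (t ≫ p)
    (by change ((t ≫ p) ≫ c) ≫ (𝟙 X₁)⟦(1 : ℤ)⟧' = (t ≫ p) ≫ c; simp)
  obtain ⟨Z, ψ, χ, hZ⟩ := distinguished_cocone_triangle φ
  have horth : ∀ W, Subsingleton (W ⟶ Q) → Subsingleton (W ⟶ F₀) → Subsingleton (W ⟶ Z) :=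
    fun W hWQ hWF => subsingleton_hom_cone hA hX hZ (hxφ.trans (id_comp a)) hyj
      (exists_eq_comp_comp_of_subsingleton hP hT hWQ hWF)
      (eq_zero_of_comp_shift_comp_eq_zero hP hT hWQ hWF)
  refine ⟨X, Z, φ, ψ, χ, ⟨X₁, T₀, x, y, _, hX₁, hT₀, hX⟩,
    mem_starSet_torsionFree_of s₁ s₂ h₁₂ tp (fun W hW => horth W ?_ ?_) (fun W hW => horth W ?_ ?_),
    hZ⟩
  · exact s₂.subsingleton_hom (h₁₂ hW) hQ
  · exact s₁.subsingleton_hom hW (tp.subF hF₀).2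
  · exact s₂.subsingleton_hom (tp.subT hW).1 hQ
  · exact subsingleton_of_forall_eq 0 (tp.hom_zero W hW F₀ hF₀)

lemma isTStructure_starSet (s₁ : IsTStructure C L₁ G₁) (s₂ : IsTStructure C L₂ G₂)
    (h₁₂ : L₁ ⊆ L₂) (tp : IsSTorsionPairIn C (L₂ ∩ shiftSet C G₁ (-1)) T F) :
    IsTStructure C (starSet C L₁ T) (starSet C (shiftSet C F 1) G₂) := by
  have hV := shiftSet_starSet_torsionFree_eq s₂ tp.toIsTorsionPairIn
  exact
  { subL _ _ := trivial
    subG _ _ := trivial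
    isoL _ _ e hA _ := isoClosed_starSet _ _ e hA
    isoG _ _ e hB _ := isoClosed_starSet _ _ e hB
    hom_zero A hA B hB f :=
      (subsingleton_hom_of_mem_starSet s₁ s₂ h₁₂ tp.toIsTorsionPairIn hA (hV ▸ hB)).elim f 0
    cover A _ := hV ▸ mem_starSet_starSet s₁ s₂ h₁₂ tp.toIsTorsionPairIn A
    shiftL _ hA := mem_shiftSet_of_shift_mem (by norm_num)
      (shift_one_mem_starSet_torsion s₁ s₂ h₁₂ tp hA)
    shiftG B hB := shiftSet_shiftSet_subset (isoClosed_starSet _ _) (by norm_num : (-1 : ℤ) + 1 = 0)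
      (mem_shiftSet_of_shift_mem (by norm_num)
        (hV ▸ shift_negOne_mem_starSet_torsionFree s₁ s₂ h₁₂ tp (hV ▸ hB))) }

lemma starSet_torsion_inter_eq (s₁ : IsTStructure C L₁ G₁) (s₂ : IsTStructure C L₂ G₂)
    (h₁₂ : L₁ ⊆ L₂) (tp : IsTorsionPairIn C (L₂ ∩ shiftSet C G₁ (-1)) T F) :
    starSet C L₁ T ∩ shiftSet C G₁ (-1) = T := by
  refine subset_antisymm ?_ fun A hA =>
    ⟨subset_starSet_right (s₁.zero_mem_le (isZero_zero C)) hA, (tp.subT hA).2⟩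
  rintro A ⟨hA, hAG₁⟩
  have hAL₂ := starSet_torsion_subset s₂ h₁₂ tp hA
  obtain ⟨X, Y, u, v, w, hX, hY, hT⟩ := hA
  have : Mono v := Triangle.mono₂ _ hT ((s₁.subsingleton_hom hX hAG₁).elim u 0)
  have := isSplitMono_of_mono v
  exact tp.summandT Y hY A v (retraction v) (IsSplitMono.id v) ⟨hAL₂, hAG₁⟩

lemma shiftSet_starSet_torsionFree_inter_eq (s₁ : IsTStructure C L₁ G₁)
    (s₂ : IsTStructure C L₂ G₂) (h₁₂ : L₁ ⊆ L₂)
    (tp : IsTorsionPairIn C (L₂ ∩ shiftSet C G₁ (-1)) T F) :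
    shiftSet C (starSet C (shiftSet C F 1) G₂) (-1) ∩ L₂ = F := by
  rw [shiftSet_starSet_torsionFree_eq s₂ tp]
  refine subset_antisymm ?_ fun B hB =>
    ⟨subset_starSet_left (s₂.zero_mem_geOne (isZero_zero C)) hB, (tp.subF hB).1⟩
  rintro B ⟨hB, hBL₂⟩
  have hBG₁ : B ∈ shiftSet C G₁ (-1) :=
    s₁.starSet_subset_geOne (fun _ hF => (tp.subF hF).2) (s₁.geOne_anti s₂ h₁₂) hB
  obtain ⟨P, Q, u, v, w, hP, hQ, hT⟩ := hB
  have : Epi u := Triangle.epi₁ _ hT ((s₂.subsingleton_hom hBL₂ hQ).elim v 0)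
  have := isSplitEpi_of_epi u
  exact tp.summandF P hP B (section_ u) u (IsSplitEpi.id u) ⟨hBL₂, hBG₁⟩

end Psi

end Pretriangulated

/-- Corollary 3.11 (2): for `t`-structures `s₁ = (L₁, G₁)`,
`s₂ = (L₂, G₂)` with `L₁ ⊆ L₂` and `ℋ = C₂^{≤0} ∩ C₁^{≥1} = L₂ ∩ G₁[-1]`, the maps
`φ(D^{≤0},D^{≥0}) = (D^{≤0} ∩ C₁^{≥1}, D^{≥1} ∩ C₂^{≤0})` and
`ψ(𝒯,ℱ) = (C₁^{≤0} * 𝒯, ℱ[1] * C₂^{≥0})` are mutually inverse, order preserving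
bijections between `t`-structures on `D` with `C₁^{≤0} ⊆ D^{≤0} ⊆ C₂^{≤0}` and
`s`-torsion pairs in `ℋ`. -/
theorem stmt6 (L₁ G₁ L₂ G₂ : Set D)
    (s₁ : IsTStructure D L₁ G₁) (s₂ : IsTStructure D L₂ G₂) (h : L₁ ⊆ L₂) :
    -- φ is well defined and ψ ∘ φ = id
    (∀ L G, IsTStructure D L G → L₁ ⊆ L → L ⊆ L₂ →
       IsSTorsionPairIn D (L₂ ∩ shiftSet D G₁ (-1))
         (L ∩ shiftSet D G₁ (-1)) (shiftSet D G (-1) ∩ L₂) ∧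
       starSet D L₁ (L ∩ shiftSet D G₁ (-1)) = L ∧
       starSet D (shiftSet D (shiftSet D G (-1) ∩ L₂) 1) G₂ = G) ∧
    -- ψ is well defined and φ ∘ ψ = id
    (∀ T F, IsSTorsionPairIn D (L₂ ∩ shiftSet D G₁ (-1)) T F →
       IsTStructure D (starSet D L₁ T) (starSet D (shiftSet D F 1) G₂) ∧
       L₁ ⊆ starSet D L₁ T ∧ starSet D L₁ T ⊆ L₂ ∧
       starSet D L₁ T ∩ shiftSet D G₁ (-1) = T ∧
       shiftSet D (starSet D (shiftSet D F 1) G₂) (-1) ∩ L₂ = F) ∧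
    -- φ preserves the orders (inclusion of aisles to inclusion of torsion classes)
    (∀ L G L' G', IsTStructure D L G → IsTStructure D L' G' →
       L₁ ⊆ L → L ⊆ L₂ → L₁ ⊆ L' → L' ⊆ L₂ → L ⊆ L' →
       L ∩ shiftSet D G₁ (-1) ⊆ L' ∩ shiftSet D G₁ (-1)) ∧
    -- ψ preserves the orders
    (∀ T F T' F', IsSTorsionPairIn D (L₂ ∩ shiftSet D G₁ (-1)) T F →
       IsSTorsionPairIn D (L₂ ∩ shiftSet D G₁ (-1)) T' F' → T ⊆ T' →
       starSet D L₁ T ⊆ starSet D L₁ T') := by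
  refine ⟨fun L G s hL₁ hL₂ => ?_, fun T F tp => ?_, ?_, ?_⟩
  · exact ⟨isSTorsionPairIn_inter s₁ s₂ s hL₁ hL₂, starSet_inter_geOne_eq s₁ s hL₁,
      starSet_shiftSet_geOne_inter_eq s₂ s hL₂⟩
  · have tp₀ := tp.toIsTorsionPairIn
    exact ⟨isTStructure_starSet s₁ s₂ h tp, subset_starSet_left (zero_mem_torsion s₁ s₂ tp₀),
      starSet_torsion_subset s₂ h tp₀, starSet_torsion_inter_eq s₁ s₂ h tp₀,
      shiftSet_starSet_torsionFree_inter_eq s₁ s₂ h tp₀⟩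
  · exact fun _ _ _ _ _ _ _ _ _ _ hLL' => Set.inter_subset_inter_left _ hLL'
  · exact fun _ _ _ _ _ _ hTT' => starSet_mono subset_rfl hTT'
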